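/- In the setting of the averaged simultaneous perturbation measurement error: let f : ℝⁿ → ℝ be continuously differentiable, x ∈ ℝⁿ, δ > 0, a₁,…,aₘ ∈ ℝⁿ (m ≥ 2) with |⟨∇f(x), aⱼ⟩| ≤ C for all j, suppose the per-measurement remainder is bounded by Kδ as before, let t > 2mKδ and 0 < ε < 1, and let Δ¹,…,Δᵏ be independent uniform random vectors on {−1,1}ᵐ. If the number of averaging repetitions satisfies k ≥ (8m²(m−1)C²/t²)·log(2/ε), then the error vector η, with ηᵢ = (1/k)Σ_{l=1}^{k}(f(x + δΣⱼΔⱼˡaⱼ) − f(x))/(δΔᵢˡ) − ⟨∇f(x), aᵢ⟩, satisfies P(‖η‖₂ ≥ t) ≤ ε·m. -/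

import Mathlib

/-!
Each coordinate `ηᵢ` of the averaged error lies within `Kδ` of `Sᵢ / k`, where
`Sᵢ = Σₗ Σ_{j ≠ i} Δⱼˡ Δᵢˡ ⟨∇f(x), aⱼ⟩` collects the cross terms. If `‖η‖₂ ≥ t` then some
`|ηᵢ| ≥ t / √m`, and since `Kδ < t / (2m)` this forces `|Sᵢ| ≥ k t / (2√m)`. Re-signing every
`Δⱼˡ` relative to `Δᵢˡ` is a bijection of the sign patterns that turns `Sᵢ` into a Rademacher sum
with `k (m - 1)` coefficients bounded by `C`, so Hoeffding's inequality (through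
`cosh x ≤ exp (x² / 2)`) bounds each of these `m` events by `ε`; a union bound gives `ε m`.
-/

open scoped RealInnerProductSpace
open Finset Real

def boolSign (b : Bool) : ℝ := if b then 1 else -1

@[simp] lemma boolSign_mul_self (b : Bool) : boolSign b * boolSign b = 1 := by
  cases b <;> norm_num [boolSign]

lemma boolSign_beq (a b : Bool) : boolSign (a == b) = boolSign a * boolSign b := by
  cases a <;> cases b <;> norm_num [boolSign]

section Rademacher

variable {ι : Type*} [Fintype ι] [DecidableEq ι]

lemma sum_exp_sum_mul_boolSign (c : ι → ℝ) :
    ∑ σ : ι → Bool, exp (∑ i, c i * boolSign (σ i)) = ∏ i, 2 * cosh (c i) := by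
  simp_rw [exp_sum]
  rw [← Fintype.prod_sum (fun i b => exp (c i * boolSign b))]
  refine prod_congr rfl fun i _ => ?_
  simp [boolSign, cosh_eq]
  ring

lemma sum_exp_sum_mul_boolSign_le (c : ι → ℝ) :
    ∑ σ : ι → Bool, exp (∑ i, c i * boolSign (σ i)) ≤
      2 ^ Fintype.card ι * exp ((∑ i, c i ^ 2) / 2) := by
  rw [sum_exp_sum_mul_boolSign, sum_div, exp_sum, ← Finset.card_univ, ← prod_const,
    ← prod_mul_distrib]
  gcongr with i
  exact cosh_le_exp_half_sq (c i)

lemma card_le_sum_mul_boolSign_le_of_nonneg (d : ι → ℝ) (c : ℝ) {θ : ℝ} (hθ : 0 ≤ θ) :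
    (#{σ : ι → Bool | c ≤ ∑ i, d i * boolSign (σ i)} : ℝ) ≤
      2 ^ Fintype.card ι * exp (θ ^ 2 * (∑ i, d i ^ 2) / 2 - θ * c) := by
  set S := fun σ : ι → Bool => ∑ i, d i * boolSign (σ i)
  have markov : (#{σ | c ≤ S σ} : ℝ) * exp (θ * c) ≤ ∑ σ, exp (θ * S σ) := by
    rw [← nsmul_eq_mul]
    refine (card_nsmul_le_sum _ _ _ fun σ hσ => ?_).trans
      (sum_le_sum_of_subset_of_nonneg (filter_subset _ _) fun σ _ _ => (exp_pos _).le)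
    exact exp_le_exp.mpr (mul_le_mul_of_nonneg_left (mem_filter.mp hσ).2 hθ)
  have mgf := sum_exp_sum_mul_boolSign_le (fun i => θ * d i)
  simp only [mul_pow, ← mul_sum, mul_assoc] at mgf
  rw [exp_sub, mul_div_assoc', le_div_iff₀ (exp_pos _)]
  exact markov.trans (by simpa [S, mul_sum] using mgf)

lemma card_le_sum_mul_boolSign_le (d : ι → ℝ) {c V : ℝ} (hc : 0 ≤ c) (hV : ∑ i, d i ^ 2 ≤ V) :
    (#{σ : ι → Bool | c ≤ ∑ i, d i * boolSign (σ i)} : ℝ) ≤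
      2 ^ Fintype.card ι * exp (-(c ^ 2 / (2 * V))) := by
  have hV0 : 0 ≤ V := (sum_nonneg fun i _ => sq_nonneg (d i)).trans hV
  refine (card_le_sum_mul_boolSign_le_of_nonneg d c (div_nonneg hc hV0)).trans ?_
  gcongr
  calc (c / V) ^ 2 * (∑ i, d i ^ 2) / 2 - c / V * c ≤ (c / V) ^ 2 * V / 2 - c / V * c := by
        gcongr
    _ = -(c ^ 2 / (2 * V)) := by
        rcases hV0.eq_or_lt with rfl | hV0
        · simp
        · field_simp; ring

lemma card_le_abs_sum_mul_boolSign_le (d : ι → ℝ) {c V : ℝ} (hc : 0 ≤ c)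
    (hV : ∑ i, d i ^ 2 ≤ V) :
    (#{σ : ι → Bool | c ≤ |∑ i, d i * boolSign (σ i)|} : ℝ) ≤
      2 * 2 ^ Fintype.card ι * exp (-(c ^ 2 / (2 * V))) := by
  have hsplit : #{σ : ι → Bool | c ≤ |∑ i, d i * boolSign (σ i)|} ≤
      #{σ : ι → Bool | c ≤ ∑ i, d i * boolSign (σ i)} +
        #{σ : ι → Bool | c ≤ ∑ i, (-d i) * boolSign (σ i)} := by
    simp only [le_abs, neg_mul, sum_neg_distrib, filter_or]
    exact card_union_le _ _
  have hneg := card_le_sum_mul_boolSign_le (fun i => -d i) hc (by simpa using hV)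
  rw [two_mul, add_mul]
  exact (Nat.cast_le.mpr hsplit).trans
    (by push_cast; exact add_le_add (card_le_sum_mul_boolSign_le d hc hV) hneg)

end Rademacher

section Decoupling

variable {ι : Type*} [DecidableEq ι]

/-- As `boolSign (a == b) = boolSign a * boolSign b`, this involution turns the products
`Δⱼ Δᵢ` (`j ≠ i`) of the cross terms into independent signs. -/
def signRelativeTo (i : ι) (s : ι → Bool) : ι → Bool :=
  fun j => if j = i then s i else (s j == s i)

lemma signRelativeTo_involutive (i : ι) : Function.Involutive (signRelativeTo i) := by
  intro s; funext j
  by_cases hj : j = i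
  · simp [signRelativeTo, hj]
  · simp only [signRelativeTo, if_neg hj]
    cases s j <;> cases s i <;> rfl

lemma boolSign_signRelativeTo_mul (i : ι) (s : ι → Bool) {j : ι} (hj : j ≠ i) :
    boolSign (signRelativeTo i s j) * boolSign (signRelativeTo i s i) = boolSign (s j) := by
  simp [signRelativeTo, hj, boolSign_beq, mul_assoc]

variable {κ : Type*} [Fintype κ] [Fintype ι]

lemma sum_ite_snd_eq_sum_sum_erase (i : ι) (F : κ → ι → ℝ) :
    ∑ p : κ × ι, (if p.2 = i then 0 else F p.1 p.2) = ∑ l, ∑ j ∈ univ.erase i, F l j := by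
  rw [Fintype.sum_prod_type]
  refine sum_congr rfl fun l _ => ?_
  rw [← sum_erase univ (a := i) (by simp)]
  exact sum_congr rfl fun j hj => if_neg (ne_of_mem_erase hj)

variable [DecidableEq κ]

lemma card_le_abs_sum_sum_erase_boolSign_mul_le (i : ι) (g : ι → ℝ) {c V : ℝ} (hc : 0 ≤ c)
    (hV : Fintype.card κ * ∑ j ∈ univ.erase i, g j ^ 2 ≤ V) :
    (#{σ : κ → ι → Bool |
        c ≤ |∑ l, ∑ j ∈ univ.erase i, boolSign (σ l j) * boolSign (σ l i) * g j|} : ℝ) ≤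
      2 * 2 ^ (Fintype.card κ * Fintype.card ι) * exp (-(c ^ 2 / (2 * V))) := by
  let d : κ × ι → ℝ := fun p => if p.2 = i then 0 else g p.2
  let e : (κ × ι → Bool) ≃ (κ → ι → Bool) :=
    (Equiv.curry κ ι Bool).trans (Equiv.piCongrRight fun _ => (signRelativeTo_involutive i).toPerm)
  have hsum : ∀ ρ, ∑ p, d p * boolSign (ρ p) =
      ∑ l, ∑ j ∈ univ.erase i, boolSign (e ρ l j) * boolSign (e ρ l i) * g j := by
    intro ρ
    rw [← sum_ite_snd_eq_sum_sum_erase]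
    refine sum_congr rfl fun p _ => ?_
    split_ifs with h
    · simp [d, h]
    · simp [e, d, h, mul_comm (g p.2), boolSign_signRelativeTo_mul i _ h]
  have hd : ∑ p, d p ^ 2 ≤ V := by
    calc ∑ p, d p ^ 2 = ∑ _l : κ, ∑ j ∈ univ.erase i, g j ^ 2 := by
          rw [← sum_ite_snd_eq_sum_sum_erase]
          exact sum_congr rfl fun p _ => by split_ifs <;> simp [d, *]
      _ ≤ V := by rwa [sum_const, card_univ, nsmul_eq_mul]
  have hcard : #{ρ : κ × ι → Bool | c ≤ |∑ p, d p * boolSign (ρ p)|} =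
      #{σ : κ → ι → Bool |
        c ≤ |∑ l, ∑ j ∈ univ.erase i, boolSign (σ l j) * boolSign (σ l i) * g j|} :=
    card_equiv e fun ρ => by simp only [mem_filter, mem_univ, true_and, hsum]
  rw [← hcard, ← Fintype.card_prod]
  exact card_le_abs_sum_mul_boolSign_le d hc hd

end Decoupling

lemma exists_norm_le_sqrt_card_mul_abs {ι : Type*} [Fintype ι] [Nonempty ι]
    (v : EuclideanSpace ℝ ι) : ∃ i, ‖v‖ ≤ √(Fintype.card ι) * |v i| := by
  obtain ⟨i, hi⟩ := Finite.exists_max fun j => |v j|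
  refine ⟨i, ?_⟩
  rw [EuclideanSpace.norm_eq, ← sqrt_sq (abs_nonneg (v i)), ← sqrt_mul (Nat.cast_nonneg _)]
  gcongr
  calc ∑ j, ‖v j‖ ^ 2 ≤ ∑ _j : ι, |v i| ^ 2 := sum_le_sum fun j _ => by
        rw [norm_eq_abs]; exact pow_le_pow_left₀ (abs_nonneg _) (hi j) 2
    _ = _ := by rw [sum_const, card_univ, nsmul_eq_mul]

section AveragedError

variable {ι : Type*} [Fintype ι] [DecidableEq ι] {k : ℕ}

/-- `M s i` stands for the single measurement `(f (x + δ • ∑ j, Δⱼ • a j) - f x) / (δ * Δᵢ)` with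
`Δ = boolSign ∘ s`, and `g i` for `⟪∇f x, a i⟫`; then `averagedError M g σ` is the paper's `η`. -/
noncomputable def averagedError (M : (ι → Bool) → ι → ℝ) (g : ι → ℝ) (σ : Fin k → ι → Bool) :
    EuclideanSpace ℝ ι :=
  (WithLp.equiv 2 (ι → ℝ)).symm fun i => 1 / (k : ℝ) * ∑ l, M (σ l) i - g i

def crossSum (g : ι → ℝ) (i : ι) (σ : Fin k → ι → Bool) : ℝ :=
  ∑ l, ∑ j ∈ univ.erase i, boolSign (σ l j) * boolSign (σ l i) * g j

def RemainderLE (M : (ι → Bool) → ι → ℝ) (g : ι → ℝ) (r : ℝ) : Prop :=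
  ∀ s i, |M s i - g i - ∑ j ∈ univ.erase i, boolSign (s j) * boolSign (s i) * g j| ≤ r

variable {M : (ι → Bool) → ι → ℝ} {g : ι → ℝ} {r : ℝ}

lemma abs_averagedError_sub_crossSum_le (hk : 0 < k) (hM : RemainderLE M g r)
    (σ : Fin k → ι → Bool) (i : ι) :
    |averagedError M g σ i - crossSum g i σ / k| ≤ r := by
  have hk' : (0 : ℝ) < k := Nat.cast_pos.mpr hk
  have hsplit : averagedError M g σ i - crossSum g i σ / k = (∑ l, (M (σ l) i - g i -
      ∑ j ∈ univ.erase i, boolSign (σ l j) * boolSign (σ l i) * g j)) / k := by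
    simp only [averagedError, crossSum, WithLp.equiv_symm_apply, PiLp.toLp_apply, sum_sub_distrib,
      sum_const, card_univ, Fintype.card_fin, nsmul_eq_mul]
    field_simp
  rw [hsplit, abs_div, Nat.abs_cast, div_le_iff₀ hk', mul_comm]
  refine (abs_sum_le_sum_abs _ _).trans
    ((sum_le_card_nsmul _ _ r fun l _ => hM (σ l) i).trans_eq ?_)
  rw [card_univ, Fintype.card_fin, nsmul_eq_mul]

lemma card_le_abs_crossSum_le {C : ℝ} (hg : ∀ j, |g j| ≤ C) (i : ι) {c ε : ℝ} (hc : 0 < c)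
    (hε : 0 < ε) (hε2 : ε < 2)
    (hkc : 2 * k * (Fintype.card ι - 1) * C ^ 2 * log (2 / ε) ≤ c ^ 2) :
    (#{σ : Fin k → ι → Bool | c ≤ |crossSum g i σ|} : ℝ) ≤ ε * 2 ^ (k * Fintype.card ι) := by
  have hL : 0 < log (2 / ε) := log_pos ((one_lt_div hε).mpr hε2)
  -- the variance proxy for which the Hoeffding exponent is exactly `log (2 / ε)`
  have hV : k * ∑ j ∈ univ.erase i, g j ^ 2 ≤ c ^ 2 / (2 * log (2 / ε)) := by
    have hsum : ∑ j ∈ univ.erase i, g j ^ 2 ≤ (Fintype.card ι - 1) * C ^ 2 := by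
      have := sum_le_card_nsmul (univ.erase i) (fun j => g j ^ 2) (C ^ 2) fun j _ =>
        sq_le_sq' (neg_le_of_abs_le (hg j)) (le_of_abs_le (hg j))
      rwa [card_erase_of_mem (mem_univ i), card_univ, nsmul_eq_mul,
        Nat.cast_pred (Fintype.card_pos_iff.mpr ⟨i⟩)] at this
    rw [le_div_iff₀ (by positivity)]
    nlinarith [mul_le_mul_of_nonneg_left hsum (by positivity : (0 : ℝ) ≤ 2 * k * log (2 / ε))]
  have hexp : exp (-(c ^ 2 / (2 * (c ^ 2 / (2 * log (2 / ε)))))) = ε / 2 := by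
    rw [show c ^ 2 / (2 * (c ^ 2 / (2 * log (2 / ε)))) = log (2 / ε) by field_simp,
      exp_neg, exp_log (by positivity), inv_div]
  have := card_le_abs_sum_sum_erase_boolSign_mul_le (κ := Fin k) i g hc.le
    (V := c ^ 2 / (2 * log (2 / ε))) (by rwa [Fintype.card_fin])
  rw [hexp, Fintype.card_fin] at this
  exact this.trans_eq (by ring)

lemma exists_le_abs_crossSum_of_le_norm_averagedError [Nonempty ι] (hk : 0 < k)
    (hM : RemainderLE M g r) {t : ℝ} (hr : r ≤ t / (2 * √(Fintype.card ι))) {σ : Fin k → ι → Bool}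
    (hσ : t ≤ ‖averagedError M g σ‖) :
    ∃ i, k * (t / (2 * √(Fintype.card ι))) ≤ |crossSum g i σ| := by
  obtain ⟨i, hi⟩ := exists_norm_le_sqrt_card_mul_abs (averagedError M g σ)
  have hm : 0 < √(Fintype.card ι) := sqrt_pos.mpr (Nat.cast_pos.mpr Fintype.card_pos)
  have hk' : (0 : ℝ) < k := Nat.cast_pos.mpr hk
  have hηi : 2 * (t / (2 * √(Fintype.card ι))) ≤ |averagedError M g σ i| := by
    rw [show 2 * (t / (2 * √(Fintype.card ι))) = t / √(Fintype.card ι) by field_simp,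
      div_le_iff₀ hm]
    linarith
  have hclose : |averagedError M g σ i| - |crossSum g i σ| / k ≤ r := by
    rw [← Nat.abs_cast, ← abs_div]
    exact (abs_sub_abs_le_abs_sub _ _).trans (abs_averagedError_sub_crossSum_le hk hM σ i)
  refine ⟨i, ?_⟩
  rw [← le_div_iff₀' hk']
  linarith

theorem card_le_norm_averagedError_le [Nonempty ι] (hk : 0 < k) {C : ℝ} (hg : ∀ j, |g j| ≤ C)
    (hM : RemainderLE M g r)
    {t ε : ℝ} (ht : 2 * Fintype.card ι * r < t) (hε : 0 < ε) (hε2 : ε < 2)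
    (hkC : 8 * Fintype.card ι * (Fintype.card ι - 1) * C ^ 2 / t ^ 2 * log (2 / ε) ≤ k) :
    (#{σ : Fin k → ι → Bool | t ≤ ‖averagedError M g σ‖} : ℝ) ≤
      ε * Fintype.card ι * 2 ^ (k * Fintype.card ι) := by
  set m : ℝ := (Fintype.card ι : ℝ)
  set s₀ := t / (2 * √m)
  have hm : 1 ≤ m := Nat.one_le_cast.mpr Fintype.card_pos
  have hr : 0 ≤ r := (abs_nonneg _).trans (hM (Classical.arbitrary _) (Classical.arbitrary _))
  have ht0 : 0 < t := by nlinarith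
  have hrs : r ≤ s₀ := by
    have : 2 * √m ≤ 2 * m := by gcongr; exact sqrt_le_left (by linarith) |>.mpr (by nlinarith)
    calc r ≤ t / (2 * m) := by rw [le_div_iff₀ (by positivity)]; linarith
      _ ≤ s₀ := div_le_div_of_nonneg_left ht0.le (by positivity) this
  have hper : ∀ i, (#{σ : Fin k → ι → Bool | k * s₀ ≤ |crossSum g i σ|} : ℝ) ≤
      ε * 2 ^ (k * Fintype.card ι) := fun i => by
    refine card_le_abs_crossSum_le hg i (by positivity) hε hε2 ?_
    have hkC' : 8 * m * (m - 1) * C ^ 2 * log (2 / ε) ≤ k * t ^ 2 := by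
      rwa [div_mul_eq_mul_div, div_le_iff₀ (by positivity)] at hkC
    rw [show (k * s₀) ^ 2 = k * (k * t ^ 2) / (4 * m) by
      rw [mul_pow, div_pow, mul_pow, sq_sqrt (by positivity)]; ring, le_div_iff₀ (by positivity)]
    calc _ = (k : ℝ) * (8 * m * (m - 1) * C ^ 2 * log (2 / ε)) := by ring
      _ ≤ _ := by gcongr
  calc (#{σ : Fin k → ι → Bool | t ≤ ‖averagedError M g σ‖} : ℝ)
      ≤ #(univ.biUnion fun i => {σ : Fin k → ι → Bool | k * s₀ ≤ |crossSum g i σ|}) := by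
        gcongr
        intro σ hσ
        simpa using exists_le_abs_crossSum_of_le_norm_averagedError hk hM hrs (mem_filter.mp hσ).2
    _ ≤ ∑ i, (#{σ : Fin k → ι → Bool | k * s₀ ≤ |crossSum g i σ|} : ℝ) := by
        exact_mod_cast card_biUnion_le
    _ ≤ ∑ _i : ι, ε * 2 ^ (k * Fintype.card ι) := sum_le_sum fun i _ => hper i
    _ = ε * m * 2 ^ (k * Fintype.card ι) := by rw [sum_const, card_univ, nsmul_eq_mul]; ring

end AveragedError

theorem stmt_6_general (n m k : ℕ) (hm : 2 ≤ m)
    (f : EuclideanSpace ℝ (Fin n) → ℝ)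
    (x : EuclideanSpace ℝ (Fin n)) (δ : ℝ) (hδ : 0 < δ)
    (a : Fin m → EuclideanSpace ℝ (Fin n)) (C : ℝ)
    (hC : ∀ j, |⟪gradient f x, a j⟫| ≤ C)
    (K : ℝ) (hK : 0 ≤ K)
    (hrem : ∀ Δ : Fin m → ℝ, (∀ j, Δ j = 1 ∨ Δ j = -1) → ∀ i : Fin m,
      abs ((f (x + δ • ∑ j, Δ j • a j) - f x) / (δ * Δ i) -
          ⟪gradient f x, a i⟫ -
          ∑ j ∈ Finset.univ.erase i, Δ j * Δ i * ⟪gradient f x, a j⟫) ≤ K * δ)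
    (t : ℝ) (ht : 2 * m * K * δ < t)
    (ε : ℝ) (hε0 : 0 < ε) (hε1 : ε < 1)
    (hk : (k : ℝ) ≥ 8 * (m : ℝ) ^ 2 * ((m : ℝ) - 1) * C ^ 2 / t ^ 2 *
      Real.log (2 / ε)) :
    (({σ : Fin k → Fin m → Bool |
        t ≤ ‖(WithLp.equiv 2 (Fin m → ℝ)).symm (fun i =>
          (1 / (k : ℝ)) * (∑ l, (f (x + δ • ∑ j,
              (if σ l j then (1 : ℝ) else -1) • a j) - f x) /
            (δ * (if σ l i then (1 : ℝ) else -1))) -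
          ⟪gradient f x, a i⟫)‖}.ncard : ℝ) / 2 ^ (k * m)) ≤ ε * m := by
  have : Nonempty (Fin m) := ⟨⟨0, by omega⟩⟩
  have hm1 : (0 : ℝ) < m - 1 := by linarith [show (2 : ℝ) ≤ m by exact_mod_cast hm]
  have ht0 : 0 < t := lt_of_le_of_lt (by positivity) ht
  have hL : 0 < log (2 / ε) := log_pos ((one_lt_div hε0).mpr (by linarith))
  set g : Fin m → ℝ := fun j => ⟪gradient f x, a j⟫
  let M : (Fin m → Bool) → Fin m → ℝ := fun s i =>
    (f (x + δ • ∑ j, boolSign (s j) • a j) - f x) / (δ * boolSign (s i))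
  have hM : RemainderLE M g (K * δ) := fun s i =>
    hrem _ (fun j => by cases s j <;> simp [boolSign]) i
  change ({σ : Fin k → Fin m → Bool | t ≤ ‖averagedError M g σ‖}.ncard : ℝ) / 2 ^ (k * m) ≤
    ε * m
  rw [div_le_iff₀ (by positivity), ← coe_filter_univ, Set.ncard_coe_finset]
  rcases k.eq_zero_or_pos with rfl | hk0
  · have hC0 : C ^ 2 ≤ 0 := by
      by_contra! hC2
      have : 0 < 8 * m ^ 2 * (m - 1) * C ^ 2 / t ^ 2 * log (2 / ε) := by positivity
      push_cast at hk
      linarith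
    have hg : ∀ j, g j = 0 := fun j => by
      have hCj : |g j| ≤ C := hC j
      exact abs_nonpos_iff.mp (by nlinarith [abs_nonneg (g j)])
    simp [averagedError, hg, ← Pi.zero_def, not_le.mpr ht0]
    positivity
  · have hkC : 8 * m * (m - 1) * C ^ 2 / t ^ 2 * log (2 / ε) ≤ k :=
      le_trans (by gcongr; nlinarith) hk
    have := card_le_norm_averagedError_le hk0 hC hM (by simpa [mul_assoc] using ht) hε0
      (by linarith) (by simpa using hkC)
    rwa [Fintype.card_fin] at this

/-- If the number of averaging repetitions satisfies
`k ≥ (8m²(m-1)C²/t²)·log(2/ε)`, then the error vector `η` of the averaged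
simultaneous perturbation measurements (with `Δ¹, …, Δᵏ` independent uniform
sign vectors on `{-1,1}ᵐ`, encoded by `σ : Fin k → Fin m → Bool` with sign
`if · then 1 else -1`, probabilities being cardinalities divided by `2^(k·m)`)
satisfies `P(‖η‖₂ ≥ t) ≤ ε·m`. -/
theorem stmt_6 (n m k : ℕ) (hm : 2 ≤ m)
    (f : EuclideanSpace ℝ (Fin n) → ℝ) (hf : ContDiff ℝ 1 f)
    (x : EuclideanSpace ℝ (Fin n)) (δ : ℝ) (hδ : 0 < δ)
    (a : Fin m → EuclideanSpace ℝ (Fin n)) (C : ℝ)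
    (hC : ∀ j, |⟪gradient f x, a j⟫| ≤ C)
    (K : ℝ) (hK : 0 ≤ K)
    (hrem : ∀ Δ : Fin m → ℝ, (∀ j, Δ j = 1 ∨ Δ j = -1) → ∀ i : Fin m,
      abs ((f (x + δ • ∑ j, Δ j • a j) - f x) / (δ * Δ i) -
          ⟪gradient f x, a i⟫ -
          ∑ j ∈ Finset.univ.erase i, Δ j * Δ i * ⟪gradient f x, a j⟫) ≤ K * δ)
    (t : ℝ) (ht : 2 * m * K * δ < t)
    (ε : ℝ) (hε0 : 0 < ε) (hε1 : ε < 1)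
    (hk : (k : ℝ) ≥ 8 * (m : ℝ) ^ 2 * ((m : ℝ) - 1) * C ^ 2 / t ^ 2 *
      Real.log (2 / ε)) :
    (({σ : Fin k → Fin m → Bool |
        t ≤ ‖(WithLp.equiv 2 (Fin m → ℝ)).symm (fun i =>
          (1 / (k : ℝ)) * (∑ l, (f (x + δ • ∑ j,
              (if σ l j then (1 : ℝ) else -1) • a j) - f x) /
            (δ * (if σ l i then (1 : ℝ) else -1))) -
          ⟪gradient f x, a i⟫)‖}.ncard : ℝ) / 2 ^ (k * m)) ≤ ε * m :=
  stmt_6_general n m k hm f x δ hδ a C hC K hK hrem t ht ε hε0 hε1 hk
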